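/- The NURBS basis functions have the partition of unity property: if the weights w 0, …, w (n−1) are all strictly positive, then for every s ∈ ℝ with k p ≤ s < k n the denominator ∑_{j=0}^{n-1} w j · B^{(j,p)}(s) is strictly positive and ∑_{i=0}^{n-1} N^i(s) = 1, where N^i(s) := w i · B^{(i,p)}(s) / ∑_{j=0}^{n-1} w j · B^{(j,p)}(s). -/

import Mathlib

/-- Interpolation factor τ(i,q,s) in the Cox–de Boor recursion. -/
noncomputable def coxTau (k : ℕ → ℝ) (i q : ℕ) (s : ℝ) : ℝ :=
  if k (i + q) ≠ k i then (s - k i) / (k (i + q) - k i) else 0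

/-- Interpolation factor σ(i,q,s) in the Cox–de Boor recursion. -/
noncomputable def coxSigma (k : ℕ → ℝ) (i q : ℕ) (s : ℝ) : ℝ :=
  if k (i + q + 1) ≠ k (i + 1) then (k (i + q + 1) - s) / (k (i + q + 1) - k (i + 1)) else 0

/-- The B-spline basis function `Bspline k p i` of degree `p` with index `i`
associated with the knot vector `k`, defined by the Cox–de Boor recursion. -/
noncomputable def Bspline (k : ℕ → ℝ) : ℕ → ℕ → ℝ → ℝ
  | 0, i, s => if k i ≤ s ∧ s < k (i + 1) then 1 else 0
  | q + 1, i, s =>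
      coxTau k i (q + 1) s * Bspline k q i s +
      coxSigma k i (q + 1) s * Bspline k q (i + 1) s

/-! Induction on the degree shows that the B-splines are nonnegative and that those whose supports
meet `[k (m+q), k n)` sum to one there: in degree zero the indicator of `[k i, k (i+1))` is a
difference of indicators of `s < k ·`, and in higher degree the recursion rewrites `B^(i,q+1)` as
`B^(i+1,q)` minus a difference of the `τ`-terms, which telescopes to boundary terms that vanish by
the support property. Positive weights then make the NURBS denominator positive, and the NURBS sum
is that denominator divided by itself. -/

open Finset

section

variable {k : ℕ → ℝ}

lemma Bspline_eq_zero_of_notMem_Ico (hk : Monotone k) :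
    ∀ (q i : ℕ) {s : ℝ}, s ∉ Set.Ico (k i) (k (i + q + 1)) → Bspline k q i s = 0
  | 0, i, s, hs => by simpa [Bspline] using hs
  | q + 1, i, s, hs => by
    have hi : s ∉ Set.Ico (k i) (k (i + q + 1)) := fun h =>
      hs ⟨h.1, h.2.trans_le (hk (by omega))⟩
    have hi' : s ∉ Set.Ico (k (i + 1)) (k (i + 1 + q + 1)) := fun h =>
      hs ⟨(hk (by omega)).trans h.1, h.2.trans_eq (congrArg k (by omega))⟩
    simp only [Bspline, Bspline_eq_zero_of_notMem_Ico hk q i hi,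
      Bspline_eq_zero_of_notMem_Ico hk q (i + 1) hi', mul_zero, add_zero]

lemma mem_Ico_of_Bspline_ne_zero (hk : Monotone k) {q i : ℕ} {s : ℝ}
    (h : Bspline k q i s ≠ 0) : s ∈ Set.Ico (k i) (k (i + q + 1)) :=
  not_not.1 (mt (Bspline_eq_zero_of_notMem_Ico hk q i) h)

lemma coxTau_nonneg (hk : Monotone k) {i q : ℕ} {s : ℝ} (hs : k i ≤ s) :
    0 ≤ coxTau k i q s := by
  unfold coxTau
  split_ifs
  · exact div_nonneg (sub_nonneg.2 hs) (sub_nonneg.2 (hk (by omega)))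
  · rfl

lemma coxSigma_nonneg (hk : Monotone k) {i q : ℕ} {s : ℝ} (hs : s ≤ k (i + q + 1)) :
    0 ≤ coxSigma k i q s := by
  unfold coxSigma
  split_ifs
  · exact div_nonneg (sub_nonneg.2 hs) (sub_nonneg.2 (hk (by omega)))
  · rfl

lemma coxSigma_add_coxTau_succ {i q : ℕ} {s : ℝ} (h : k (i + q + 1) ≠ k (i + 1)) :
    coxSigma k i q s + coxTau k (i + 1) q s = 1 := by
  have h' : k (i + 1 + q) ≠ k (i + 1) := by rwa [show i + 1 + q = i + q + 1 by omega]
  have hd : k (i + q + 1) - k (i + 1) ≠ 0 := sub_ne_zero.2 h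
  rw [coxSigma, coxTau, if_pos h, if_pos h', show i + 1 + q = i + q + 1 by omega]
  field_simp
  ring

lemma Bspline_nonneg (hk : Monotone k) : ∀ (q i : ℕ) (s : ℝ), 0 ≤ Bspline k q i s
  | 0, i, s => by unfold Bspline; positivity
  | q + 1, i, s => by
    have hτ : 0 ≤ coxTau k i (q + 1) s * Bspline k q i s := by
      by_cases h : Bspline k q i s = 0
      · simp [h]
      · exact mul_nonneg (coxTau_nonneg hk (mem_Ico_of_Bspline_ne_zero hk h).1)
          (Bspline_nonneg hk q i s)
    have hσ : 0 ≤ coxSigma k i (q + 1) s * Bspline k q (i + 1) s := by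
      by_cases h : Bspline k q (i + 1) s = 0
      · simp [h]
      · have hs := (mem_Ico_of_Bspline_ne_zero hk h).2.le
        rw [show i + 1 + q + 1 = i + (q + 1) + 1 by omega] at hs
        exact mul_nonneg (coxSigma_nonneg hk hs) (Bspline_nonneg hk q (i + 1) s)
    exact add_nonneg hτ hσ

lemma Bspline_zero_eq_sub (hk : Monotone k) (i : ℕ) (s : ℝ) :
    Bspline k 0 i s =
      (if s < k (i + 1) then 1 else 0) - (if s < k i then 1 else 0) := by
  have hi : k i ≤ k (i + 1) := hk (by omega)
  unfold Bspline
  split_ifs <;> grind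

/-- On the support of `B^(i+1,q)` we have `σ(i,q+1) + τ(i+1,q+1) = 1`, so the recursion becomes
a telescoping step. -/
lemma Bspline_succ_eq (hk : Monotone k) (q i : ℕ) (s : ℝ) :
    Bspline k (q + 1) i s = Bspline k q (i + 1) s -
      (coxTau k (i + 1) (q + 1) s * Bspline k q (i + 1) s -
        coxTau k i (q + 1) s * Bspline k q i s) := by
  by_cases h : Bspline k q (i + 1) s = 0
  · simp [Bspline, h]
  · have hs := mem_Ico_of_Bspline_ne_zero hk h
    have hne : k (i + (q + 1) + 1) ≠ k (i + 1) := by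
      rw [show i + (q + 1) + 1 = i + 1 + q + 1 by omega]
      exact (hs.1.trans_lt hs.2).ne'
    rw [Bspline, ← sub_eq_of_eq_add' (coxSigma_add_coxTau_succ (s := s) hne).symm]
    ring

lemma Bspline_sum_Ico_eq_one (hk : Monotone k) :
    ∀ (q : ℕ) {m n : ℕ} {s : ℝ}, k (m + q) ≤ s → s < k n →
      ∑ i ∈ Ico m n, Bspline k q i s = 1
  | 0, m, n, s, hm, hn => by
    rw [add_zero] at hm
    have hmn := hk.reflect_lt (hm.trans_lt hn)
    rw [sum_congr rfl fun i _ => Bspline_zero_eq_sub hk i s,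
      sum_Ico_sub (fun i => if s < k i then (1 : ℝ) else 0) hmn.le]
    simp [hn, hm.not_gt]
  | q + 1, m, n, s, hm, hn => by
    have hmn : m + 1 ≤ n := by have := hk.reflect_lt (hm.trans_lt hn); omega
    set F : ℕ → ℝ := fun i => coxTau k i (q + 1) s * Bspline k q i s
    have hFm : F m = 0 := by
      simp only [F, Bspline_eq_zero_of_notMem_Ico hk q m fun h =>
        h.2.not_ge (hm.trans_eq' (congrArg k (by omega))), mul_zero]
    have hFn : F n = 0 := by
      simp only [F, Bspline_eq_zero_of_notMem_Ico hk q n fun h => h.1.not_gt hn, mul_zero]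
    have hshift : ∑ i ∈ Ico m n, Bspline k q (i + 1) s = 1 := by
      rw [sum_Ico_add' (fun i => Bspline k q i s), sum_Ico_succ_top hmn,
        Bspline_sum_Ico_eq_one hk q (hm.trans_eq' (congrArg k (by omega))) hn,
        Bspline_eq_zero_of_notMem_Ico hk q n fun h => h.1.not_gt hn, add_zero]
    rw [sum_congr rfl fun i _ => Bspline_succ_eq hk q i s, sum_sub_distrib,
      sum_Ico_sub F (by omega), hFm, hFn, hshift, sub_zero, sub_zero]

end

lemma sum_mul_pos_of_sum_pos {ι : Type*} {t : Finset ι} {w f : ι → ℝ}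
    (hw : ∀ i ∈ t, 0 < w i) (hf : ∀ i ∈ t, 0 ≤ f i) (hsum : 0 < ∑ i ∈ t, f i) :
    0 < ∑ i ∈ t, w i * f i := by
  obtain ⟨i, hi, hfi⟩ := exists_ne_zero_of_sum_ne_zero hsum.ne'
  exact sum_pos' (fun j hj => mul_nonneg (hw j hj).le (hf j hj))
    ⟨i, hi, mul_pos (hw i hi) ((hf i hi).lt_of_ne' hfi)⟩

theorem nurbs_partition_of_unity_general (n p : ℕ) (k : ℕ → ℝ)
    (hk : ∀ j, k j ≤ k (j + 1)) (w : ℕ → ℝ) (hw : ∀ i < n, 0 < w i)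
    (s : ℝ) (h1 : k p ≤ s) (h2 : s < k n) :
    0 < ∑ j ∈ Finset.range n, w j * Bspline k p j s ∧
      ∑ i ∈ Finset.range n,
        w i * Bspline k p i s / ∑ j ∈ Finset.range n, w j * Bspline k p j s = 1 := by
  have hmono : Monotone k := monotone_nat_of_le_succ hk
  have hsum : ∑ i ∈ range n, Bspline k p i s = 1 := by
    rw [range_eq_Ico]
    exact Bspline_sum_Ico_eq_one hmono p (by rwa [zero_add]) h2
  have hpos : 0 < ∑ j ∈ range n, w j * Bspline k p j s :=
    sum_mul_pos_of_sum_pos (fun i hi => hw i (mem_range.1 hi))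
      (fun i _ => Bspline_nonneg hmono p i s) (hsum ▸ one_pos)
  exact ⟨hpos, by rw [← sum_div, div_self hpos.ne']⟩

theorem nurbs_partition_of_unity (n p : ℕ) (hn : 1 ≤ n) (k : ℕ → ℝ)
    (hk : ∀ j, k j ≤ k (j + 1)) (w : ℕ → ℝ) (hw : ∀ i < n, 0 < w i)
    (s : ℝ) (h1 : k p ≤ s) (h2 : s < k n) :
    0 < ∑ j ∈ Finset.range n, w j * Bspline k p j s ∧
      ∑ i ∈ Finset.range n,
        w i * Bspline k p i s / ∑ j ∈ Finset.range n, w j * Bspline k p j s = 1 :=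
  nurbs_partition_of_unity_general n p k hk w hw s h1 h2
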